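/- arXiv:2406.15745 — 4 statements merged into one kernel-verified Lean document; each statement's English description precedes it below -/
import Mathlib

section
/- Let R be a ring with proper involution and let m be a positive integer. An element a ∈ R has an m-weak group inverse if and only if a admits an m-weak group decomposition, i.e. there exist x, y ∈ R such that a = x + y, x^* a^(m-1) y = 0, y x = 0, x has a group inverse, and y is nilpotent. -/
/-- `z` is an `m`-weak group inverse of `a`. -/
def IsMWGI {R : Type*} [Ring R] [StarRing R] (m : ℕ) (a z : R) : Prop :=
  a * z ^ 2 = z ∧ ∃ k : ℕ, z * a ^ (k + 1) = a ^ k ∧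
    star (a ^ k) * a ^ (m + 1) * z = star (a ^ k) * a ^ m

/-- `w` is a weak group inverse of `b`. -/
def IsWGI {R : Type*} [Ring R] [StarRing R] (b w : R) : Prop :=
  b * w ^ 2 = w ∧ star (star b * b ^ 2 * w) = star b * b ^ 2 * w ∧
    ∃ k : ℕ, b ^ k = w * b ^ (k + 1)

/-- `x` is a group inverse of `u`. -/
def IsGroupInv {R : Type*} [Ring R] (u x : R) : Prop :=
  u * x ^ 2 = x ∧ u * x = x * u ∧ u = u ^ 2 * x

/-- `d` is a Drazin inverse of `a`. -/
def IsDrazin {R : Type*} [Ring R] (a d : R) : Prop :=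
  a * d ^ 2 = d ∧ a * d = d * a ∧ ∃ k : ℕ, a ^ k = d * a ^ (k + 1)

/-- `y` is a core-EP inverse of `a`. -/
def IsCoreEP {R : Type*} [Ring R] [StarRing R] (a y : R) : Prop :=
  a * y ^ 2 = y ∧ star (a * y) = a * y ∧ ∃ k : ℕ, a ^ k = y * a ^ (k + 1)

/-!
Given an `m`-weak group inverse `z` of `a`, put `x = a²z` and `y = a - a²z`. The identity
`z a² z = a z` makes `z` the group inverse of `x` and gives `y x = 0`; then `y^(j+1) = y a^j`,
which vanishes for `j = k + 1` because `z a^(k+1) = a^k`. Since `x` is a left multiple of `a^k`,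
the star condition on `a^k` passes to `x` and becomes `x^* a^(m-1) y = 0`.

Conversely, the group inverse `g` of `x` is an `m`-weak group inverse of `a = x + y`: from
`y x = 0` and `y` nilpotent we get `a^(j+1) = x a^j` for large `j`, and `a^(m+1) g = a^(m-1) x`,
so the star condition reduces to `x^* a^(m-1) y = 0`.
-/

section

variable {R : Type*} [Ring R]

def IsMWGDecomposition [StarRing R] (m : ℕ) (a x y : R) : Prop :=
  a = x + y ∧ star x * a ^ (m - 1) * y = 0 ∧ y * x = 0 ∧ (∃ g, IsGroupInv x g) ∧ IsNilpotent y

section MulEqZero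

variable {x y : R} (hyx : y * x = 0)
include hyx

theorem add_pow_succ_of_mul_eq_zero (j : ℕ) :
    (x + y) ^ (j + 1) = x * (x + y) ^ j + y ^ (j + 1) := by
  induction j with
  | zero => simp
  | succ j ih =>
    have hyjx : y ^ (j + 1) * x = 0 := by rw [pow_succ, mul_assoc, hyx, mul_zero]
    calc (x + y) ^ (j + 1 + 1) = (x * (x + y) ^ j + y ^ (j + 1)) * (x + y) := by
          rw [pow_succ _ (j + 1), ih]
      _ = x * (x + y) ^ (j + 1) + y ^ (j + 1) * x + y ^ (j + 1 + 1) := by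
          rw [add_mul, mul_assoc, ← pow_succ, mul_add, ← pow_succ, ← add_assoc]
      _ = x * (x + y) ^ (j + 1) + y ^ (j + 1 + 1) := by rw [hyjx, add_zero]

theorem add_pow_succ_of_mul_eq_zero_of_pow_eq_zero {p j : ℕ} (hp : y ^ p = 0) (hpj : p ≤ j) :
    (x + y) ^ (j + 1) = x * (x + y) ^ j := by
  rw [add_pow_succ_of_mul_eq_zero hyx, pow_eq_zero_of_le (hpj.trans j.le_succ) hp, add_zero]

theorem pow_succ_eq_mul_add_pow_of_mul_eq_zero (j : ℕ) : y ^ (j + 1) = y * (x + y) ^ j := by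
  induction j with
  | zero => simp
  | succ j ih =>
    rw [pow_succ' (x + y), ← mul_assoc, mul_add, hyx, zero_add, mul_assoc, ← ih, ← pow_succ']

end MulEqZero

namespace IsGroupInv

variable {u x : R} (hx : IsGroupInv u x)
include hx

theorem mul_mul_self : x * u * u = u := by
  rw [← hx.2.1, mul_assoc, ← hx.2.1, ← mul_assoc, ← sq, ← hx.2.2]

theorem mul_eq_zero_of_mul_eq_zero {y : R} (hyu : y * u = 0) : y * x = 0 := by
  rw [← hx.1, ← mul_assoc, hyu, zero_mul]

end IsGroupInv

section Outer

variable {a z : R} (haz : a * z ^ 2 = z)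
include haz

theorem pow_mul_pow_succ_of_mul_sq (j : ℕ) : a ^ j * z ^ (j + 1) = z := by
  induction j with
  | zero => simp
  | succ j ih =>
    calc a ^ (j + 1) * z ^ (j + 1 + 1) = a ^ j * (a * z ^ 2) * z ^ j := by
          rw [pow_succ a, pow_succ' z (j + 1), pow_succ' z j]; noncomm_ring
      _ = z := by rw [haz, mul_assoc, ← pow_succ', ih]

theorem star_sq_mul_mul_pow_mul_sub_sq_mul_eq_zero [StarRing R] {k n : ℕ}
    (hst : star (a ^ k) * a ^ (n + 1 + 1) * z = star (a ^ k) * a ^ (n + 1)) :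
    star (a ^ 2 * z) * a ^ n * (a - a ^ 2 * z) = 0 := by
  have hx : a ^ 2 * z = a ^ k * (a ^ 2 * z ^ (k + 1)) := by
    rw [← mul_assoc, ← pow_add, add_comm, pow_add, mul_assoc, pow_mul_pow_succ_of_mul_sq haz]
  have hy : a ^ n * (a - a ^ 2 * z) = a ^ (n + 1) - a ^ (n + 1 + 1) * z := by
    rw [mul_sub, ← pow_succ, ← mul_assoc, ← pow_add]
  rw [mul_assoc, hy, hx, star_mul, mul_assoc, mul_sub, ← mul_assoc (star (a ^ k)), hst, sub_self,
    mul_zero]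

variable {k : ℕ} (hk : z * a ^ (k + 1) = a ^ k)
include hk

theorem mul_sq_mul_of_mul_pow_succ : z * a ^ 2 * z = a * z :=
  calc z * a ^ 2 * z = z * a ^ 2 * (a ^ k * z ^ (k + 1)) := by
        rw [pow_mul_pow_succ_of_mul_sq haz]
    _ = z * a ^ (k + 1) * a * z ^ (k + 1) := by
        have hpow : a ^ 2 * a ^ k = a ^ (k + 1) * a := by
          rw [← pow_add, ← pow_succ]; congr 1; omega
        rw [← mul_assoc, mul_assoc z, hpow, ← mul_assoc]
    _ = a * (a ^ k * z ^ (k + 1)) := by rw [hk, ← pow_succ, pow_succ', mul_assoc]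
    _ = a * z := by rw [pow_mul_pow_succ_of_mul_sq haz]

theorem isGroupInv_sq_mul : IsGroupInv (a ^ 2 * z) z := by
  have hzaz := mul_sq_mul_of_mul_pow_succ haz hk
  refine ⟨?_, ?_, ?_⟩
  · calc a ^ 2 * z * z ^ 2 = a * (a * z ^ 2) * z := by noncomm_ring
      _ = z := by rw [haz, mul_assoc, ← sq, haz]
  · calc a ^ 2 * z * z = a * (a * z ^ 2) := by noncomm_ring
      _ = z * (a ^ 2 * z) := by rw [haz, ← mul_assoc, hzaz]
  · symm
    calc (a ^ 2 * z) ^ 2 * z = a ^ 2 * (z * a ^ 2 * z) * z := by noncomm_ring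
      _ = a ^ 2 * z := by rw [hzaz, mul_assoc, mul_assoc, ← sq, haz]

theorem sub_sq_mul_mul_sq_mul_eq_zero : (a - a ^ 2 * z) * (a ^ 2 * z) = 0 :=
  calc (a - a ^ 2 * z) * (a ^ 2 * z) = a ^ 3 * z - a ^ 2 * (z * a ^ 2 * z) := by noncomm_ring
    _ = 0 := by rw [mul_sq_mul_of_mul_pow_succ haz hk]; noncomm_ring

theorem isNilpotent_sub_sq_mul : IsNilpotent (a - a ^ 2 * z) := by
  refine ⟨k + 2, ?_⟩
  have hyx := sub_sq_mul_mul_sq_mul_eq_zero haz hk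
  rw [pow_succ_eq_mul_add_pow_of_mul_eq_zero hyx, add_sub_cancel, sub_mul, mul_assoc, hk,
    ← pow_succ', ← pow_add, add_comm 2 k, sub_self]

end Outer

theorem IsMWGI.isMWGDecomposition [StarRing R] {n : ℕ} {a z : R} (h : IsMWGI (n + 1) a z) :
    IsMWGDecomposition (n + 1) a (a ^ 2 * z) (a - a ^ 2 * z) := by
  obtain ⟨haz, k, hk, hst⟩ := h
  refine ⟨(add_sub_cancel _ _).symm, ?_, sub_sq_mul_mul_sq_mul_eq_zero haz hk,
    ⟨z, isGroupInv_sq_mul haz hk⟩, isNilpotent_sub_sq_mul haz hk⟩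
  rw [Nat.add_sub_cancel]
  exact star_sq_mul_mul_pow_mul_sub_sq_mul_eq_zero haz hst

theorem IsMWGDecomposition.isMWGI [StarRing R] {n : ℕ} {a x y g : R}
    (h : IsMWGDecomposition (n + 1) a x y) (hg : IsGroupInv x g) : IsMWGI (n + 1) a g := by
  obtain ⟨rfl, hst, hyx, -, p, hp⟩ := h
  rw [Nat.add_sub_cancel] at hst
  have hyg := hg.mul_eq_zero_of_mul_eq_zero hyx
  have hpow := fun j (hj : p ≤ j) => add_pow_succ_of_mul_eq_zero_of_pow_eq_zero hyx hp hj
  refine ⟨?_, p + 1, ?_, ?_⟩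
  · rw [add_mul, hg.1, sq, ← mul_assoc, hyg, zero_mul, add_zero]
  · rw [hpow (p + 1) p.le_succ, hpow p le_rfl, ← mul_assoc, ← mul_assoc, hg.mul_mul_self]
  · have hag : (x + y) ^ (n + 1 + 1) * g = (x + y) ^ n * x := by
      calc (x + y) ^ (n + 1 + 1) * g = (x + y) ^ n * ((x + y) * ((x + y) * g)) := by
            simp only [pow_succ, mul_assoc]
        _ = (x + y) ^ n * x := by
            rw [add_mul x y g, hyg, add_zero, add_mul, ← mul_assoc, ← mul_assoc y, hyx, zero_mul,
              add_zero, ← sq, ← hg.2.2]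
    have hy : star ((x + y) ^ (p + 1)) * (x + y) ^ n * y = 0 := by
      rw [hpow p le_rfl, star_mul, mul_assoc (star _), mul_assoc (star _), hst, mul_zero]
    rw [mul_assoc, hag, pow_succ (x + y) n, mul_add, mul_add, ← mul_assoc _ _ y, hy, add_zero]

end

theorem mwgi_iff_decomposition_general {R : Type*} [Ring R] [StarRing R]
    (m : ℕ) (hm : 0 < m) (a : R) :
    (∃ z : R, IsMWGI m a z) ↔
      ∃ x y : R, a = x + y ∧ star x * a ^ (m - 1) * y = 0 ∧ y * x = 0 ∧
        (∃ g : R, IsGroupInv x g) ∧ IsNilpotent y := by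
  obtain ⟨n, rfl⟩ := Nat.exists_eq_add_one_of_ne_zero hm.ne'
  constructor
  · rintro ⟨z, hz⟩
    exact ⟨_, _, hz.isMWGDecomposition⟩
  · rintro ⟨x, y, hd⟩
    obtain ⟨g, hg⟩ := hd.2.2.2.1
    exact ⟨g, IsMWGDecomposition.isMWGI hd hg⟩

theorem mwgi_iff_decomposition {R : Type*} [Ring R] [StarRing R]
    (hproper : ∀ x : R, star x * x = 0 → x = 0)
    (m : ℕ) (hm : 0 < m) (a : R) :
    (∃ z : R, IsMWGI m a z) ↔
      ∃ x y : R, a = x + y ∧ star x * a ^ (m - 1) * y = 0 ∧ y * x = 0 ∧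
        (∃ g : R, IsGroupInv x g) ∧ IsNilpotent y :=
  mwgi_iff_decomposition_general m hm a
end

section
/- Let R be a ring with proper involution and let m be a positive integer. An element a ∈ R has an m-weak group inverse if and only if a has a Drazin inverse d and there exist x ∈ R and n ∈ ℕ such that x = a x^2, d^* a^(m+1) x = d^* a^m, and a^n = x a^(n+1). -/
section Monoid

variable {M : Type*} [Monoid M] {a z : M}

lemma mul_pow_add_two_of_mul_sq_eq (h : a * z ^ 2 = z) (j : ℕ) :
    a * z ^ (j + 2) = z ^ (j + 1) := by
  rw [add_comm, pow_add, ← mul_assoc, h, ← pow_succ']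

lemma pow_mul_pow_succ_of_mul_sq_eq (h : a * z ^ 2 = z) (j : ℕ) :
    a ^ j * z ^ (j + 1) = z := by
  induction j with
  | zero => simp
  | succ j ih => rw [pow_succ, mul_assoc, mul_pow_add_two_of_mul_sq_eq h, ih]

lemma mul_pow_succ_of_le {n N : ℕ} (h : z * a ^ (n + 1) = a ^ n) (hN : n ≤ N) :
    z * a ^ (N + 1) = a ^ N := by
  obtain ⟨j, rfl⟩ := Nat.exists_eq_add_of_le hN
  rw [add_right_comm, pow_add, ← mul_assoc, h, pow_add]

lemma pow_mul_pow_add_of_mul_pow_succ {k : ℕ} (h : z * a ^ (k + 1) = a ^ k) (j : ℕ) :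
    z ^ j * a ^ (k + j) = a ^ k := by
  induction j with
  | zero => simp
  | succ j ih =>
    rw [pow_succ, mul_assoc, ← add_assoc, mul_pow_succ_of_le h (Nat.le_add_right k j), ih]

end Monoid

lemma isDrazin_of_mul_sq_eq_of_mul_pow_succ {R : Type*} [Ring R] {a z : R} {k : ℕ}
    (hz : a * z ^ 2 = z) (hk : z * a ^ (k + 1) = a ^ k) :
    IsDrazin a (z ^ (k + 2) * a ^ (k + 1)) := by
  have hk' : z * a ^ (k + 2) = a ^ (k + 1) := mul_pow_succ_of_le hk (Nat.le_succ k)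
  have had : a * (z ^ (k + 2) * a ^ (k + 1)) = z ^ (k + 1) * a ^ (k + 1) := by
    rw [← mul_assoc, mul_pow_add_two_of_mul_sq_eq hz]
  have hda : z ^ (k + 2) * a ^ (k + 1) * a = z ^ (k + 1) * a ^ (k + 1) := by
    rw [mul_assoc, ← pow_succ, pow_succ z, mul_assoc, hk']
  refine ⟨?_, had.trans hda.symm, k, ?_⟩
  · calc a * (z ^ (k + 2) * a ^ (k + 1)) ^ 2
        = z ^ (k + 1) * (a ^ (k + 1) * z ^ (k + 2)) * a ^ (k + 1) := by
          simp only [sq, ← mul_assoc, had]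
      _ = z ^ (k + 2) * a ^ (k + 1) := by
          rw [pow_mul_pow_succ_of_mul_sq_eq hz, ← pow_succ]
  · calc a ^ k = z ^ (k + 1) * a ^ (k + (k + 1)) := (pow_mul_pow_add_of_mul_pow_succ hk _).symm
      _ = z ^ (k + 1) * a ^ (k + 1) * a ^ k := by rw [mul_assoc, ← pow_add, add_comm (k + 1)]
      _ = z ^ (k + 2) * a ^ (k + 1) * a * a ^ k := by rw [hda]
      _ = z ^ (k + 2) * a ^ (k + 1) * a ^ (k + 1) := by rw [mul_assoc _ a, ← pow_succ']

lemma star_mul_mul_eq_of_star_mul_mul_eq {R : Type*} [Monoid R] [StarMul R]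
    {c w A B C : R} (h : star c * A * B = star c * C) :
    star (c * w) * A * B = star (c * w) * C := by
  simp only [star_mul, mul_assoc] at h ⊢
  rw [h]

theorem mwgi_iff_drazin_cond_general {R : Type*} [Ring R] [StarRing R]
    (m : ℕ) (a : R) :
    (∃ z : R, IsMWGI m a z) ↔
      ∃ d : R, IsDrazin a d ∧ ∃ x : R, ∃ n : ℕ,
        x = a * x ^ 2 ∧ star d * a ^ (m + 1) * x = star d * a ^ m ∧
        a ^ n = x * a ^ (n + 1) := by
  constructor
  · rintro ⟨z, hz, k, hzk, hstar⟩
    have hd := isDrazin_of_mul_sq_eq_of_mul_pow_succ hz hzk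
    refine ⟨_, hd, z, k, hz.symm, ?_, hzk.symm⟩
    have key :=
      star_mul_mul_eq_of_star_mul_mul_eq (w := (z ^ (k + 2) * a ^ (k + 1)) ^ (k + 1)) hstar
    rwa [pow_mul_pow_succ_of_mul_sq_eq hd.1] at key
  · rintro ⟨d, ⟨-, -, k, hdk⟩, x, n, hx, hxd, hxn⟩
    refine ⟨x, hx.symm, max n k, mul_pow_succ_of_le hxn.symm (le_max_left n k), ?_⟩
    have key := star_mul_mul_eq_of_star_mul_mul_eq (w := a ^ (max n k + 1)) hxd
    rwa [mul_pow_succ_of_le hdk.symm (le_max_right n k)] at key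

theorem mwgi_iff_drazin_cond {R : Type*} [Ring R] [StarRing R]
    (hproper : ∀ x : R, star x * x = 0 → x = 0)
    (m : ℕ) (hm : 0 < m) (a : R) :
    (∃ z : R, IsMWGI m a z) ↔
      ∃ d : R, IsDrazin a d ∧ ∃ x : R, ∃ n : ℕ,
        x = a * x ^ 2 ∧ star d * a ^ (m + 1) * x = star d * a ^ m ∧
        a ^ n = x * a ^ (n + 1) :=
  mwgi_iff_drazin_cond_general m a
end

section
/- Let R be a ring with proper involution, m a positive integer, and let x be an m-weak group inverse of a ∈ R. Then (1) x = x a x; (2) a x = x a^2 x; and (3) a x = a^j x^j for every positive integer j. -/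
/-!
Iterating `a x² = x` gives `x = aⁿ xⁿ⁺¹` for every `n`, hence `a x = aʲ xʲ` for `j ≥ 1`. In the
products `x a x` and `x a² x`, expand the rightmost `x` as `aᵏ xᵏ⁺¹`: the left factor
`x a` then meets `aᵏ` and the relation `x aᵏ⁺¹ = aᵏ` collapses it.
-/

section Monoid

variable {M : Type*} [Monoid M] {a x : M}

theorem pow_mul_pow_succ_eq_of_mul_sq_eq (h : a * x ^ 2 = x) (n : ℕ) :
    a ^ n * x ^ (n + 1) = x := by
  induction n with
  | zero => simp
  | succ n ih =>
    calc a ^ (n + 1) * x ^ (n + 1 + 1) = a ^ n * (a * x ^ 2) * x ^ n := by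
          rw [pow_succ a, show n + 1 + 1 = 2 + n by omega, pow_add]; simp only [mul_assoc]
      _ = x := by rw [h, mul_assoc, ← pow_succ', ih]

theorem pow_mul_pow_eq_mul_of_mul_sq_eq (h : a * x ^ 2 = x) {j : ℕ} (hj : 0 < j) :
    a ^ j * x ^ j = a * x := by
  obtain ⟨n, rfl⟩ := Nat.exists_eq_add_of_lt hj
  rw [zero_add, pow_succ', mul_assoc, pow_mul_pow_succ_eq_of_mul_sq_eq h]

theorem mul_mul_self_eq_self_of_mul_sq_eq (h : a * x ^ 2 = x) {k : ℕ}
    (hk : x * a ^ (k + 1) = a ^ k) : x * a * x = x := by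
  calc x * a * x = x * a * (a ^ k * x ^ (k + 1)) := by rw [pow_mul_pow_succ_eq_of_mul_sq_eq h k]
    _ = x * a ^ (k + 1) * x ^ (k + 1) := by rw [pow_succ' a k]; simp only [mul_assoc]
    _ = x := by rw [hk, pow_mul_pow_succ_eq_of_mul_sq_eq h]

theorem mul_sq_mul_eq_mul_of_mul_sq_eq (h : a * x ^ 2 = x) {k : ℕ}
    (hk : x * a ^ (k + 1) = a ^ k) : x * a ^ 2 * x = a * x := by
  have hpow : a ^ 2 * a ^ k = a ^ (k + 1) * a := by rw [← pow_add, ← pow_succ, add_comm]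
  calc x * a ^ 2 * x = x * (a ^ 2 * a ^ k) * x ^ (k + 1) := by
        simp only [mul_assoc, pow_mul_pow_succ_eq_of_mul_sq_eq h k]
    _ = x * a ^ (k + 1) * (a * x ^ (k + 1)) := by rw [hpow]; simp only [mul_assoc]
    _ = a ^ (k + 1) * x ^ (k + 1) := by rw [hk, ← mul_assoc, ← pow_succ]
    _ = a * x := pow_mul_pow_eq_mul_of_mul_sq_eq h k.succ_pos

end Monoid

theorem mwgi_basic_identities_general {R : Type*} [Ring R] [StarRing R]
    (m : ℕ) (a x : R) (hx : IsMWGI m a x) :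
    x = x * a * x ∧ a * x = x * a ^ 2 * x ∧
      ∀ j : ℕ, 0 < j → a * x = a ^ j * x ^ j := by
  obtain ⟨hsq, k, hk, -⟩ := hx
  exact ⟨(mul_mul_self_eq_self_of_mul_sq_eq hsq hk).symm,
    (mul_sq_mul_eq_mul_of_mul_sq_eq hsq hk).symm,
    fun j hj => (pow_mul_pow_eq_mul_of_mul_sq_eq hsq hj).symm⟩

theorem mwgi_basic_identities {R : Type*} [Ring R] [StarRing R]
    (hproper : ∀ x : R, star x * x = 0 → x = 0)
    (m : ℕ) (hm : 0 < m) (a x : R) (hx : IsMWGI m a x) :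
    x = x * a * x ∧ a * x = x * a ^ 2 * x ∧
      ∀ j : ℕ, 0 < j → a * x = a ^ j * x ^ j :=
  mwgi_basic_identities_general m a x hx
end

section
/- Let R be a ring with proper involution, m a positive integer, and let y be a core-EP inverse of a ∈ R. Then a has an m-weak group inverse, and y^(m+1) a^m is an m-weak group inverse of a; that is, a^{W_m} = (a^{D̄})^(m+1) a^m. -/
section Monoid

variable {M : Type*} [Monoid M] {a y : M}

theorem mul_pow_add_two_of_mul_sq_eq_self (h : a * y ^ 2 = y) (n : ℕ) :
    a * y ^ (n + 2) = y ^ (n + 1) := by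
  rw [add_comm n, pow_add, ← mul_assoc, h, ← pow_succ']

theorem pow_mul_pow_succ_of_mul_sq_eq_self (h : a * y ^ 2 = y) (n : ℕ) :
    a ^ n * y ^ (n + 1) = y := by
  induction n with
  | zero => simp
  | succ n ih => rw [pow_succ, mul_assoc, mul_pow_add_two_of_mul_sq_eq_self h n, ih]

theorem mul_sq_pow_succ_mul_pow_of_mul_sq_eq_self (h : a * y ^ 2 = y) (m : ℕ) :
    a * (y ^ (m + 1) * a ^ m) ^ 2 = y ^ (m + 1) * a ^ m := by
  calc a * (y ^ (m + 1) * a ^ m) ^ 2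
      = a * y ^ (m + 1) * (a ^ m * y ^ (m + 1)) * a ^ m := by simp only [sq, mul_assoc]
    _ = a * y ^ (m + 2) * a ^ m := by
        rw [pow_mul_pow_succ_of_mul_sq_eq_self h, mul_assoc a, ← pow_succ]
    _ = y ^ (m + 1) * a ^ m := by rw [mul_pow_add_two_of_mul_sq_eq_self h]

theorem pow_mul_pow_add_of_pow_eq_mul_pow_succ {k : ℕ} (h : a ^ k = y * a ^ (k + 1)) (n : ℕ) :
    y ^ n * a ^ (k + n) = a ^ k := by
  induction n with
  | zero => simp
  | succ n ih =>
    calc y ^ (n + 1) * a ^ (k + (n + 1))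
        = y ^ n * (y * a ^ (k + 1) * a ^ n) := by
          rw [pow_succ, show k + (n + 1) = k + 1 + n by omega, pow_add]
          simp only [mul_assoc]
      _ = a ^ k := by rw [← h, ← pow_add, ih]

theorem mul_mul_pow_of_pow_eq_mul_pow_succ {k : ℕ} (hsq : a * y ^ 2 = y)
    (hk : a ^ k = y * a ^ (k + 1)) : a * y * a ^ k = a ^ k := by
  rw [hk, ← mul_assoc, mul_assoc a, ← sq, hsq]

end Monoid

theorem star_pow_mul_mul_of_isCoreEP {R : Type*} [Monoid R] [StarMul R] {a y : R} {k : ℕ}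
    (hsq : a * y ^ 2 = y) (hsa : star (a * y) = a * y) (hk : a ^ k = y * a ^ (k + 1)) :
    star (a ^ k) * (a * y) = star (a ^ k) := by
  conv_rhs => rw [← mul_mul_pow_of_pow_eq_mul_pow_succ hsq hk, star_mul, hsa]

theorem coreEP_gives_mwgi_general {R : Type*} [Ring R] [StarRing R]
    (m : ℕ) (a y : R) (hy : IsCoreEP a y) :
    IsMWGI m a (y ^ (m + 1) * a ^ m) := by
  obtain ⟨hsq, hsa, k, hk⟩ := hy
  refine ⟨mul_sq_pow_succ_mul_pow_of_mul_sq_eq_self hsq m, k, ?_, ?_⟩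
  · rw [mul_assoc, ← pow_add, show m + (k + 1) = k + (m + 1) by omega,
      pow_mul_pow_add_of_pow_eq_mul_pow_succ hk]
  · calc star (a ^ k) * a ^ (m + 1) * (y ^ (m + 1) * a ^ m)
        = star (a ^ k) * (a * (a ^ m * y ^ (m + 1))) * a ^ m := by
          simp only [pow_succ', mul_assoc]
      _ = star (a ^ k) * a ^ m := by
          rw [pow_mul_pow_succ_of_mul_sq_eq_self hsq, star_pow_mul_mul_of_isCoreEP hsq hsa hk]

theorem coreEP_gives_mwgi {R : Type*} [Ring R] [StarRing R]
    (hproper : ∀ x : R, star x * x = 0 → x = 0)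
    (m : ℕ) (hm : 0 < m) (a y : R) (hy : IsCoreEP a y) :
    IsMWGI m a (y ^ (m + 1) * a ^ m) :=
  coreEP_gives_mwgi_general m a y hy
end
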